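/- Let n ∈ ℕ and φ ∈ S(ℝ). Then the sup-norm closure of N^∞_φ(ℝⁿ) is contained in S(ℝⁿ). -/

import Mathlib

open Filter Topology MeasureTheory

noncomputable section

/-- `ℝⁿ` with the Euclidean norm. -/
abbrev E (n : ℕ) := EuclideanSpace ℝ (Fin n)

/-- Closure of a set of real-valued functions with respect to the supremum
norm over the whole domain (global uniform convergence). -/
def UnifClosure {α : Type*} (S : Set (α → ℝ)) : Set (α → ℝ) :=
  {f | ∀ ε : ℝ, 0 < ε → ∃ g ∈ S, ∀ x, |f x - g x| ≤ ε}

/-- The space `N^l_φ(ℝⁿ)` of `l`-hidden-layer neural networks (the value at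
`l = 0` is a dummy). -/
def NN (φ : ℝ → ℝ) (n : ℕ) : ℕ → Set (E n → ℝ)
  | 0 => {0}
  | 1 => ↑(Submodule.span ℝ
      {f : E n → ℝ | ∃ (a : E n) (b : ℝ), f = fun x => φ ((inner ℝ a x : ℝ) + b)})
  | (l+2) => ↑(Submodule.span ℝ
      {f : E n → ℝ | ∃ g ∈ NN φ n (l+1), ∃ b : ℝ, f = fun x => φ (g x + b)})

/-- `N^∞_φ(ℝⁿ) = ⋃_{l ≥ 1} N^l_φ(ℝⁿ)`. -/
def NNinf (φ : ℝ → ℝ) (n : ℕ) : Set (E n → ℝ) :=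
  {f | ∃ l : ℕ, 1 ≤ l ∧ f ∈ NN φ n l}

/-- `C₀(ℝⁿ)`: continuous real-valued functions on `ℝⁿ` vanishing at infinity. -/
def C0 (n : ℕ) : Set (E n → ℝ) :=
  {f | Continuous f ∧ Tendsto f (cocompact (E n)) (𝓝 0)}

/-- `S(ℝ)`: continuous functions `ℝ → ℝ` with finite limits at both `−∞`
and `∞`. -/
def SR : Set (ℝ → ℝ) :=
  {f | Continuous f ∧ (∃ L : ℝ, Tendsto f atBot (𝓝 L)) ∧
    (∃ L : ℝ, Tendsto f atTop (𝓝 L))}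

/-- `S(ℝⁿ)`: the uniformly closed span of finite products
`x ↦ ∏_{j=1}^m g_j(a_j·x)` with `g_j ∈ S(ℝ)` and `a_j ∈ ℝⁿ`. -/
def SRn (n : ℕ) : Set (E n → ℝ) :=
  UnifClosure ↑(Submodule.span ℝ
    {f : E n → ℝ | ∃ (m : ℕ), 1 ≤ m ∧ ∃ (g : Fin m → ℝ → ℝ) (a : Fin m → E n),
      (∀ j, g j ∈ SR) ∧ f = fun x => ∏ j, g j (inner ℝ (a j) x : ℝ)})

/-!
The products `x ↦ ∏ g_j(a_j·x)` form a monoid of bounded functions, so their span is an algebra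
of bounded functions and `S(ℝⁿ)` is its uniform closure. The uniform closure of an algebra of
bounded functions is again such an algebra, hence closed under polynomials; by Weierstrass on the
bounded range of `g`, it is then closed under `g ↦ ψ ∘ g` for every continuous `ψ`. Induction on the
depth puts every network in it: a first-layer unit `φ(a·x + b)` is a one-factor product, and a
deeper unit `φ(g + b)` is a continuous function of a network `g`.
-/

open Asymptotics

section UnifClosure

variable {α : Type*}

lemma subset_unifClosure (S : Set (α → ℝ)) : S ⊆ UnifClosure S :=
  fun f hf _ hε => ⟨f, hf, fun x => by simpa using hε.le⟩

lemma unifClosure_mono {S T : Set (α → ℝ)} (h : S ⊆ T) : UnifClosure S ⊆ UnifClosure T :=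
  fun _ hf ε hε => let ⟨g, hg, hfg⟩ := hf ε hε; ⟨g, h hg, hfg⟩

lemma unifClosure_unifClosure_subset (S : Set (α → ℝ)) :
    UnifClosure (UnifClosure S) ⊆ UnifClosure S := by
  intro f hf ε hε
  obtain ⟨g, hg, hfg⟩ := hf (ε / 2) (half_pos hε)
  obtain ⟨h, hh, hgh⟩ := hg (ε / 2) (half_pos hε)
  exact ⟨h, hh, fun x => by linarith [abs_sub_le (f x) (g x) (h x), hfg x, hgh x]⟩

variable (α) in
def boundedFunctions : Subalgebra ℝ (α → ℝ) where
  carrier := {f | f =O[⊤] (1 : α → ℝ)}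
  mul_mem' hf hg := (hf.mul hg).congr_right fun _ => mul_one _
  add_mem' hf hg := hf.add hg
  algebraMap_mem' c := isBigO_const_one ℝ c ⊤

lemma mem_boundedFunctions_of_abs_le {f : α → ℝ} {C : ℝ} (h : ∀ x, |f x| ≤ C) :
    f ∈ boundedFunctions α :=
  isBigO_top.2 ⟨C, fun x => by simpa using h x⟩

lemma exists_pos_abs_le_of_mem_boundedFunctions {f : α → ℝ} (hf : f ∈ boundedFunctions α) :
    ∃ C, 0 < C ∧ ∀ x, |f x| ≤ C := by
  obtain ⟨C, hC, h⟩ := IsBigO.exists_pos hf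
  exact ⟨C, hC, fun x => by simpa using isBigOWith_top.1 h x⟩

lemma unifClosure_subset_boundedFunctions {S : Set (α → ℝ)} (hS : S ⊆ boundedFunctions α) :
    UnifClosure S ⊆ boundedFunctions α := by
  intro f hf
  obtain ⟨g, hg, hfg⟩ := hf 1 one_pos
  have hdiff : f - g ∈ boundedFunctions α := mem_boundedFunctions_of_abs_le hfg
  simpa using add_mem hdiff (hS hg)

lemma add_mem_unifClosure (A : Subalgebra ℝ (α → ℝ)) {f g : α → ℝ}
    (hf : f ∈ UnifClosure A) (hg : g ∈ UnifClosure A) : f + g ∈ UnifClosure A := by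
  intro ε hε
  obtain ⟨f', hf', hff'⟩ := hf (ε / 2) (half_pos hε)
  obtain ⟨g', hg', hgg'⟩ := hg (ε / 2) (half_pos hε)
  refine ⟨f' + g', A.add_mem hf' hg', fun x => ?_⟩
  calc |(f + g) x - (f' + g') x| = |(f x - f' x) + (g x - g' x)| := by
        simp only [Pi.add_apply]; ring_nf
    _ ≤ |f x - f' x| + |g x - g' x| := abs_add_le _ _
    _ ≤ ε := by linarith [hff' x, hgg' x]

lemma mul_mem_unifClosure {A : Subalgebra ℝ (α → ℝ)} (hA : A ≤ boundedFunctions α)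
    {f g : α → ℝ} (hf : f ∈ UnifClosure A) (hg : g ∈ UnifClosure A) :
    f * g ∈ UnifClosure A := by
  obtain ⟨F, hF, hfF⟩ := exists_pos_abs_le_of_mem_boundedFunctions
    (unifClosure_subset_boundedFunctions hA hf)
  obtain ⟨G, hG, hgG⟩ := exists_pos_abs_le_of_mem_boundedFunctions
    (unifClosure_subset_boundedFunctions hA hg)
  intro ε hε
  set η := min 1 (ε / (F + G + 1))
  have hη : 0 < η := by positivity
  obtain ⟨f', hf', hff'⟩ := hf η hη
  obtain ⟨g', hg', hgg'⟩ := hg η hη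
  refine ⟨f' * g', A.mul_mem hf' hg', fun x => ?_⟩
  have hg'x : |g' x| ≤ G + 1 := by
    linarith [abs_sub_abs_le_abs_sub (g' x) (g x), abs_sub_comm (g x) (g' x), hgg' x, hgG x,
      min_le_left 1 (ε / (F + G + 1))]
  calc |(f * g) x - (f' * g') x| = |f x * (g x - g' x) + (f x - f' x) * g' x| := by
        simp only [Pi.mul_apply]; ring_nf
    _ ≤ |f x| * |g x - g' x| + |f x - f' x| * |g' x| := by
        rw [← abs_mul, ← abs_mul]; exact abs_add_le _ _
    _ ≤ F * η + η * (G + 1) := add_le_add (mul_le_mul (hfF x) (hgg' x) (abs_nonneg _) hF.le)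
        (mul_le_mul (hff' x) hg'x (abs_nonneg _) hη.le)
    _ = (F + G + 1) * η := by ring
    _ ≤ ε := (le_div_iff₀' (by positivity)).1 (min_le_right _ _)

def Subalgebra.unifClosure (A : Subalgebra ℝ (α → ℝ)) (hA : A ≤ boundedFunctions α) :
    Subalgebra ℝ (α → ℝ) where
  carrier := UnifClosure A
  mul_mem' := mul_mem_unifClosure hA
  add_mem' := add_mem_unifClosure A
  algebraMap_mem' c := subset_unifClosure _ (A.algebraMap_mem c)

lemma Subalgebra.unifClosure_le_boundedFunctions (A : Subalgebra ℝ (α → ℝ))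
    (hA : A ≤ boundedFunctions α) : A.unifClosure hA ≤ boundedFunctions α :=
  unifClosure_subset_boundedFunctions hA

lemma Subalgebra.comp_mem_of_unifClosure_subset {C : Subalgebra ℝ (α → ℝ)}
    (hCb : C ≤ boundedFunctions α) (hCc : UnifClosure (C : Set (α → ℝ)) ⊆ C) {φ : ℝ → ℝ}
    (hφ : Continuous φ) {g : α → ℝ} (hg : g ∈ C) : φ ∘ g ∈ C := by
  obtain ⟨R, -, hR⟩ := exists_pos_abs_le_of_mem_boundedFunctions (hCb hg)
  refine hCc fun ε hε => ?_
  obtain ⟨p, hp⟩ := exists_polynomial_near_of_continuousOn (-R) R φ hφ.continuousOn ε hε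
  refine ⟨Polynomial.aeval g p, ?_, fun x => ?_⟩
  · simpa using (Polynomial.aeval (⟨g, hg⟩ : C) p).2
  · rw [abs_sub_comm]
    simpa using (hp (g x) (abs_le.1 (hR x))).le

end UnifClosure

lemma const_mem_SR (c : ℝ) : (fun _ => c) ∈ SR :=
  ⟨continuous_const, ⟨c, tendsto_const_nhds⟩, ⟨c, tendsto_const_nhds⟩⟩

lemma comp_add_const_mem_SR {φ : ℝ → ℝ} (hφ : φ ∈ SR) (b : ℝ) : (fun t => φ (t + b)) ∈ SR := by
  obtain ⟨hc, ⟨L, hL⟩, ⟨L', hL'⟩⟩ := hφ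
  exact ⟨hc.comp (continuous_add_const b),
    ⟨L, hL.comp (tendsto_atBot_add_const_right _ b tendsto_id)⟩,
    ⟨L', hL'.comp (tendsto_atTop_add_const_right _ b tendsto_id)⟩⟩

lemma mem_boundedFunctions_of_mem_SR {φ : ℝ → ℝ} (hφ : φ ∈ SR) : φ ∈ boundedFunctions ℝ := by
  obtain ⟨hc, ⟨L, hL⟩, ⟨L', hL'⟩⟩ := hφ
  obtain ⟨C, hC⟩ := isBounded_iff_forall_norm_le.1 <|
    hc.isBounded_range_iff_isBigO_atTop_atBot.2 ⟨hL'.isBigO_one ℝ, hL.isBigO_one ℝ⟩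
  exact mem_boundedFunctions_of_abs_le fun x => hC _ ⟨x, rfl⟩

section Ridge

variable (V : Type*) [NormedAddCommGroup V] [InnerProductSpace ℝ V]

def ridgeProducts : Submonoid (V → ℝ) where
  carrier := {f | ∃ (m : ℕ), 1 ≤ m ∧ ∃ (g : Fin m → ℝ → ℝ) (a : Fin m → V),
      (∀ j, g j ∈ SR) ∧ f = fun x => ∏ j, g j (inner ℝ (a j) x : ℝ)}
  mul_mem' := by
    rintro _ _ ⟨m, hm, g, a, hg, rfl⟩ ⟨m', -, g', a', hg', rfl⟩
    refine ⟨m + m', by omega, Fin.append g g', Fin.append a a',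
      Fin.addCases (by simpa using hg) (by simpa using hg'), ?_⟩
    ext x
    simp [Fin.prod_univ_add]
  one_mem' := ⟨1, le_rfl, fun _ _ => 1, fun _ => 0, fun _ => const_mem_SR 1, by ext; simp⟩

variable {V}

lemma comp_inner_mem_ridgeProducts {g : ℝ → ℝ} (hg : g ∈ SR) (a : V) :
    (fun x => g (inner ℝ a x)) ∈ ridgeProducts V :=
  ⟨1, le_rfl, fun _ => g, fun _ => a, fun _ => hg, by ext; simp⟩

lemma ridgeProducts_subset_boundedFunctions :
    (ridgeProducts V : Set (V → ℝ)) ⊆ boundedFunctions V := by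
  rintro _ ⟨m, -, g, a, hg, rfl⟩
  have := IsBigO.finsetProd (s := Finset.univ) (l := ⊤) (g := fun _ _ => (1 : ℝ))
    fun j _ => (mem_boundedFunctions_of_mem_SR (hg j)).comp_tendsto
      (tendsto_top (f := fun x : V => inner ℝ (a j) x))
  exact this.congr_right fun _ => by simp

variable (V) in
def ridgeAlgebra : Subalgebra ℝ (V → ℝ) := Algebra.adjoin ℝ (ridgeProducts V)

lemma ridgeAlgebra_le_boundedFunctions : ridgeAlgebra V ≤ boundedFunctions V :=
  Algebra.adjoin_le ridgeProducts_subset_boundedFunctions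

end Ridge

lemma SRn_eq_unifClosure_ridgeAlgebra (n : ℕ) :
    SRn n = (ridgeAlgebra (E n)).unifClosure ridgeAlgebra_le_boundedFunctions := by
  show _ = UnifClosure ((ridgeAlgebra (E n)).toSubmodule : Set (E n → ℝ))
  rw [ridgeAlgebra, Algebra.adjoin_eq_span, Submonoid.closure_eq]
  rfl

lemma NN_succ_subset_unifClosure_ridgeAlgebra {n : ℕ} {φ : ℝ → ℝ} (hφ : φ ∈ SR) (l : ℕ) :
    NN φ n (l + 1) ⊆ (ridgeAlgebra (E n)).unifClosure ridgeAlgebra_le_boundedFunctions := by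
  set C := (ridgeAlgebra (E n)).unifClosure ridgeAlgebra_le_boundedFunctions
  induction l with
  | zero =>
    refine Submodule.span_le (p := Subalgebra.toSubmodule C) |>.2 ?_
    rintro _ ⟨a, b, rfl⟩
    exact subset_unifClosure _ <| Algebra.subset_adjoin <|
      comp_inner_mem_ridgeProducts (comp_add_const_mem_SR hφ b) a
  | succ l ih =>
    refine Submodule.span_le (p := Subalgebra.toSubmodule C) |>.2 ?_
    rintro _ ⟨g, hg, b, rfl⟩
    exact C.comp_mem_of_unifClosure_subset
      (Subalgebra.unifClosure_le_boundedFunctions _ _) (unifClosure_unifClosure_subset _)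
      (comp_add_const_mem_SR hφ b).1 (ih hg)

theorem stmt17_general (n : ℕ) (φ : ℝ → ℝ) (hφ : φ ∈ SR) :
    UnifClosure (NNinf φ n) ⊆ SRn n := by
  rw [SRn_eq_unifClosure_ridgeAlgebra]
  refine (unifClosure_mono ?_).trans (unifClosure_unifClosure_subset _)
  rintro f ⟨_ | l, hl, hf⟩
  · omega
  · exact NN_succ_subset_unifClosure_ridgeAlgebra hφ l hf

/-- For `φ ∈ S(ℝ)`, the uniform closure of `N^∞_φ(ℝⁿ)` is contained in
`S(ℝⁿ)`. -/
theorem stmt17 (n : ℕ) (hn : 1 ≤ n) (φ : ℝ → ℝ) (hφ : φ ∈ SR) :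
    UnifClosure (NNinf φ n) ⊆ SRn n :=
  stmt17_general n φ hφ
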